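/- arXiv:1403.6756 — 5 statements merged into one kernel-verified Lean document; each statement's English description precedes it below -/
import Mathlib

section
/- Let (X, f, ε) be an exterior discrete semi-flow. Then D(X) ⊆ D̄(X) ⊆ PA(L̄(X)), where D̄(X) = {x ∈ X : for every E ∈ ε there is n ∈ ℕ such that f^m(x) ∈ closure(E) for all m ≥ n}. -/
open Set Topology

/-- The omega-limit set of a point `x` under the discrete semi-flow generated by `f`:
`Λ(x) = ⋂ₙ closure {f^[m] x : m ≥ n}`. -/
def Lambda {X : Type*} [TopologicalSpace X] (f : X → X) (x : X) : Set X :=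
  ⋂ n : ℕ, closure ((fun m => f^[m] x) '' Set.Ici n)

/-- The omega-limit set of a subset `S`: `Λ(S) = ⋃_{x ∈ S} Λ(x)`. -/
def LambdaSet {X : Type*} [TopologicalSpace X] (f : X → X) (S : Set X) : Set X :=
  ⋃ x ∈ S, Lambda f x

/-- The region of pseudo-attraction of `S`: `PA(S) = {x : Λ(x) ⊆ S}`. -/
def PA {X : Type*} [TopologicalSpace X] (f : X → X) (S : Set X) : Set X :=
  {x | Lambda f x ⊆ S}

/-- The region of weak-attraction of `S`: `WA(S) = {x : Λ(x) ∩ S ≠ ∅}`. -/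
def WA {X : Type*} [TopologicalSpace X] (f : X → X) (S : Set X) : Set X :=
  {x | (Lambda f x ∩ S).Nonempty}

/-- The region of attraction of `S`: `A(S) = {x : ∅ ≠ Λ(x) ⊆ S}`. -/
def RA {X : Type*} [TopologicalSpace X] (f : X → X) (S : Set X) : Set X :=
  {x | (Lambda f x).Nonempty ∧ Lambda f x ⊆ S}

/-- `X` is (positively) Lagrange stable at `x` if the closure of the trajectory of `x`
is compact. -/
def LagrangeStableAt {X : Type*} [TopologicalSpace X] (f : X → X) (x : X) : Prop :=
  IsCompact (closure (Set.range fun n : ℕ => f^[n] x))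

/-- An externology on a topological space: a nonempty family of open sets closed under
finite intersections such that any open set containing a member belongs to the family. -/
def IsExternology {X : Type*} [TopologicalSpace X] (ε : Set (Set X)) : Prop :=
  ε.Nonempty ∧ (∀ E ∈ ε, IsOpen E) ∧ (∀ E ∈ ε, ∀ F ∈ ε, E ∩ F ∈ ε) ∧
    (∀ E ∈ ε, ∀ U : Set X, IsOpen U → E ⊆ U → U ∈ ε)

/-- The limit space of an externology: `L(X) = ⋂_{E ∈ ε} E`. -/
def limitSpace {X : Type*} (ε : Set (Set X)) : Set X := ⋂ E ∈ ε, E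

/-- The bar-limit space of an externology: `L̄(X) = ⋂_{E ∈ ε} closure E`. -/
def barLimit {X : Type*} [TopologicalSpace X] (ε : Set (Set X)) : Set X :=
  ⋂ E ∈ ε, closure E

/-- The region of pseudo-attraction of the externology:
`D(X) = {x : ∀ E ∈ ε, f^[m] x ∈ E for all large m}`. -/
def Dregion {X : Type*} (f : X → X) (ε : Set (Set X)) : Set X :=
  {x | ∀ E ∈ ε, ∃ n : ℕ, ∀ m ≥ n, f^[m] x ∈ E}

/-- The region of pseudo-bar-attraction of the externology:
`D̄(X) = {x : ∀ E ∈ ε, f^[m] x ∈ closure E for all large m}`. -/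
def Dbar {X : Type*} [TopologicalSpace X] (f : X → X) (ε : Set (Set X)) : Set X :=
  {x | ∀ E ∈ ε, ∃ n : ℕ, ∀ m ≥ n, f^[m] x ∈ closure E}

/-- A right-absorbing open subset: an open set that eventually contains the trajectory
of every point. -/
def RightAbsorbing {X : Type*} [TopologicalSpace X] (f : X → X) (E : Set X) : Prop :=
  IsOpen E ∧ ∀ y : X, ∃ n : ℕ, ∀ m ≥ n, f^[m] y ∈ E

/-- A point `x` is periodic if `f^[n] x = x` for some `n ≥ 1`. -/
def IsPeriodicPoint {X : Type*} (f : X → X) (x : X) : Prop := ∃ n ≥ 1, f^[n] x = x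

theorem Lambda_subset_of_eventually_mem {X : Type*} [TopologicalSpace X] {f : X → X} {x : X}
    {C : Set X} (hC : IsClosed C) {n : ℕ} (h : ∀ m ≥ n, f^[m] x ∈ C) : Lambda f x ⊆ C := by
  have htail : (fun m => f^[m] x) '' Ici n ⊆ C := by
    rintro _ ⟨m, hm, rfl⟩
    exact h m hm
  exact (iInter_subset _ n).trans (closure_minimal htail hC)

theorem Dregion_subset_Dbar {X : Type*} [TopologicalSpace X] (f : X → X) (ε : Set (Set X)) :
    Dregion f ε ⊆ Dbar f ε := fun _ hx E hE =>
  let ⟨n, hn⟩ := hx E hE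
  ⟨n, fun m hm => subset_closure (hn m hm)⟩

theorem Dbar_subset_PA_barLimit {X : Type*} [TopologicalSpace X] (f : X → X)
    (ε : Set (Set X)) : Dbar f ε ⊆ PA f (barLimit ε) := fun _ hx =>
  subset_iInter₂ fun E hE =>
    let ⟨_, hn⟩ := hx E hE
    Lambda_subset_of_eventually_mem isClosed_closure hn

theorem stmt7_general {X : Type*} [TopologicalSpace X] (f : X → X)
    (ε : Set (Set X)) :
    Dregion f ε ⊆ Dbar f ε ∧ Dbar f ε ⊆ PA f (barLimit ε) :=
  ⟨Dregion_subset_Dbar f ε, Dbar_subset_PA_barLimit f ε⟩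

theorem stmt7 {X : Type*} [TopologicalSpace X] (f : X → X) (hf : Continuous f)
    (ε : Set (Set X)) (hε : IsExternology ε) (hflow : ∀ E ∈ ε, f ⁻¹' E ∈ ε) :
    Dregion f ε ⊆ Dbar f ε ∧ Dbar f ε ⊆ PA f (barLimit ε) :=
  stmt7_general f ε
end

section
/- Let (X, f, ε) be an exterior discrete semi-flow. If X is Lagrange stable at every point of PA(L(X)), then PA(L(X)) ⊆ D(X). -/
open Set Topology

open Filter

theorem mem_Lambda_iff_mapClusterPt {X : Type*} [TopologicalSpace X] {f : X → X} {x y : X} :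
    y ∈ Lambda f x ↔ MapClusterPt y atTop (fun n => f^[n] x) := by
  simp [Lambda, mapClusterPt_atTop_iff_forall_mem_closure]

/-- If the trajectory left a neighbourhood of `Λ(x)` infinitely often, compactness would give
those times a cluster point outside `Λ(x)`. -/
theorem LagrangeStableAt.tendsto_nhdsSet_Lambda {X : Type*} [TopologicalSpace X] {f : X → X}
    {x : X} (h : LagrangeStableAt f x) :
    Tendsto (fun n => f^[n] x) atTop (𝓝ˢ (Lambda f x)) :=
  h.tendsto_nhdsSet_of_mapClusterPt (Eventually.of_forall fun n => subset_closure ⟨n, rfl⟩)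
    fun _ _ hy => mem_Lambda_iff_mapClusterPt.2 hy

theorem LagrangeStableAt.eventually_mem_of_Lambda_subset {X : Type*} [TopologicalSpace X]
    {f : X → X} {x : X} {U : Set X} (h : LagrangeStableAt f x) (hU : IsOpen U)
    (hΛU : Lambda f x ⊆ U) : ∀ᶠ n in atTop, f^[n] x ∈ U :=
  h.tendsto_nhdsSet_Lambda (hU.mem_nhdsSet.2 hΛU)

theorem limitSpace_subset {X : Type*} {ε : Set (Set X)} {E : Set X} (hE : E ∈ ε) :
    limitSpace ε ⊆ E :=
  biInter_subset_of_mem hE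

theorem stmt9_general {X : Type*} [TopologicalSpace X] (f : X → X)
    (ε : Set (Set X)) (hε : IsExternology ε)
    (hL : ∀ x ∈ PA f (limitSpace ε), LagrangeStableAt f x) :
    PA f (limitSpace ε) ⊆ Dregion f ε := by
  intro x hx E hE
  exact eventually_atTop.1 <|
    (hL x hx).eventually_mem_of_Lambda_subset (hε.2.1 E hE) (hx.trans (limitSpace_subset hE))

theorem stmt9 {X : Type*} [TopologicalSpace X] (f : X → X) (hf : Continuous f)
    (ε : Set (Set X)) (hε : IsExternology ε) (hflow : ∀ E ∈ ε, f ⁻¹' E ∈ ε)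
    (hL : ∀ x ∈ PA f (limitSpace ε), LagrangeStableAt f x) :
    PA f (limitSpace ε) ⊆ Dregion f ε :=
  stmt9_general f ε hε hL
end

section
/- Let (X, f, ε) be an exterior discrete semi-flow, suppose X is Lagrange stable at every point of PA(L̄(X)), and suppose WA(L̄(X) \ L(X)) = ∅. Then A(L̄(X)) = D̄(X). -/
open Set Topology

/-!
`Λ(x)` is the ω-limit set of `x` along `atTop`, so a Lagrange stable trajectory has
nonempty ω-limit set and eventually enters every open neighbourhood of it, while a trajectory that
eventually stays in a set `S` has its ω-limit set in `closure S`. If `x ∈ A(L̄(X))`, the hypothesis on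
`WA` forces `Λ(x) ⊆ L(X) ⊆ E` for each `E ∈ ε`, so the trajectory eventually lies in `E`. Conversely,
`x ∈ D̄(X)` gives `Λ(x) ⊆ closure E` for all `E ∈ ε`, i.e. `Λ(x) ⊆ L̄(X)`, and Lagrange stability
makes `Λ(x)` nonempty.
-/

open Filter omegaLimit

section OmegaLimit

variable {X : Type*} [TopologicalSpace X] {f : X → X} {x : X}

theorem lambda_eq_omegaLimit (f : X → X) (x : X) :
    Lambda f x = ω⁺ (fun m y => f^[m] y) {x} := by
  simp only [Lambda, omegaLimit_def, image2_singleton_right]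
  refine Subset.antisymm (subset_iInter₂ fun u hu => ?_)
    (subset_iInter fun n => biInter_subset_of_mem (Ici_mem_atTop n))
  obtain ⟨n, hn⟩ := mem_atTop_sets.1 hu
  exact (iInter_subset _ n).trans (closure_mono (image_mono hn))

theorem closure_image2_iterate_subset_closure_range (x : X) (u : Set ℕ) :
    closure (image2 (fun m y => f^[m] y) u {x}) ⊆ closure (range fun n => f^[n] x) :=
  closure_mono (by rw [image2_singleton_right]; exact image_subset_range _ _)

theorem LagrangeStableAt.lambda_nonempty (h : LagrangeStableAt f x) : (Lambda f x).Nonempty := by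
  rw [lambda_eq_omegaLimit]
  exact nonempty_omegaLimit_of_isCompact_absorbing _ _ _ h
    ⟨univ, univ_mem, closure_image2_iterate_subset_closure_range x univ⟩ (singleton_nonempty x)

theorem LagrangeStableAt.eventually_mem_of_lambda_subset (h : LagrangeStableAt f x) {U : Set X}
    (hU : IsOpen U) (hΛ : Lambda f x ⊆ U) : ∀ᶠ m in atTop, f^[m] x ∈ U := by
  rw [lambda_eq_omegaLimit] at hΛ
  obtain ⟨u, hu, hsub⟩ :=
    eventually_closure_subset_of_isCompact_absorbing_of_isOpen_of_omegaLimit_subset' _ _ _ h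
      ⟨univ, univ_mem, closure_image2_iterate_subset_closure_range x univ⟩ hU hΛ
  exact mem_of_superset hu fun m hm => hsub (subset_closure (mem_image2_of_mem hm rfl))

theorem lambda_subset_closure_of_eventually_mem {S : Set X} (h : ∀ᶠ m in atTop, f^[m] x ∈ S) :
    Lambda f x ⊆ closure S := by
  rw [lambda_eq_omegaLimit]
  refine (omegaLimit_subset_closure_image2 _ _ _ h).trans (closure_mono ?_)
  rintro _ ⟨m, hm, y, rfl, rfl⟩
  exact hm

theorem mem_PA_of_WA_diff_eq_empty {S T : Set X} (hWA : WA f (S \ T) = ∅) (hx : x ∈ PA f S) :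
    x ∈ PA f T := fun y hy =>
  by_contra fun hyT => eq_empty_iff_forall_notMem.1 hWA x ⟨y, hy, hx hy, hyT⟩

theorem mem_PA_barLimit_of_mem_Dbar {ε : Set (Set X)} (hx : x ∈ Dbar f ε) :
    x ∈ PA f (barLimit ε) := fun _ hy => mem_iInter₂.2 fun E hE => by
  simpa only [closure_closure] using
    lambda_subset_closure_of_eventually_mem (eventually_atTop.2 (hx E hE)) hy

end OmegaLimit

theorem stmt12_general {X : Type*} [TopologicalSpace X] (f : X → X)
    (ε : Set (Set X)) (hε : IsExternology ε)
    (hL : ∀ x ∈ PA f (barLimit ε), LagrangeStableAt f x)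
    (hWA : WA f (barLimit ε \ limitSpace ε) = ∅) :
    RA f (barLimit ε) = Dbar f ε := by
  ext x
  refine ⟨fun ⟨_, hΛ⟩ E hE => ?_, fun hx => ?_⟩
  · have hΛE : Lambda f x ⊆ E :=
      (mem_PA_of_WA_diff_eq_empty hWA hΛ).trans (biInter_subset_of_mem hE)
    have hev := (hL x hΛ).eventually_mem_of_lambda_subset (hε.2.1 E hE) hΛE
    exact eventually_atTop.1 (hev.mono fun _ hm => subset_closure hm)
  · have hΛ := mem_PA_barLimit_of_mem_Dbar hx
    exact ⟨(hL x hΛ).lambda_nonempty, hΛ⟩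

theorem stmt12 {X : Type*} [TopologicalSpace X] (f : X → X) (hf : Continuous f)
    (ε : Set (Set X)) (hε : IsExternology ε) (hflow : ∀ E ∈ ε, f ⁻¹' E ∈ ε)
    (hL : ∀ x ∈ PA f (barLimit ε), LagrangeStableAt f x)
    (hWA : WA f (barLimit ε \ limitSpace ε) = ∅) :
    RA f (barLimit ε) = Dbar f ε :=
  stmt12_general f ε hε hL hWA
end

section
/- Let X be a T₁ topological space and f : X → X a continuous map. For every x ∈ X, the point x is not periodic if and only if X \ {x} is a right-absorbing open subset of X. -/
open Set Topology

theorem IsPeriodicPoint.exists_iterate_eq_ge {X : Type*} {f : X → X} {x : X}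
    (hx : IsPeriodicPoint f x) (n : ℕ) : ∃ m ≥ n, f^[m] x = x := by
  obtain ⟨k, hk, hkx⟩ := hx
  exact ⟨(n + 1) * k, by nlinarith, Function.IsPeriodicPt.const_mul hkx (n + 1)⟩

theorem eventually_iterate_ne_of_not_isPeriodicPoint {X : Type*} {f : X → X} {x : X}
    (hx : ¬ IsPeriodicPoint f x) (y : X) : ∃ n, ∀ m ≥ n, f^[m] y ≠ x := by
  by_cases hy : ∃ m, f^[m] y = x
  · obtain ⟨m, hm⟩ := hy
    -- a second visit at time `k > m` would give `f^[k - m] x = x`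
    refine ⟨m + 1, fun k hk hkx => hx ⟨k - m, by omega, ?_⟩⟩
    rw [← hm, ← Function.iterate_add_apply, Nat.sub_add_cancel (by omega), hkx, hm]
  · exact ⟨0, fun m _ hm => hy ⟨m, hm⟩⟩

theorem stmt14_general {X : Type*} [TopologicalSpace X] [T1Space X] (f : X → X)
    (x : X) :
    ¬ IsPeriodicPoint f x ↔ RightAbsorbing f ({x}ᶜ) := by
  constructor
  · exact fun hx => ⟨isOpen_compl_singleton, eventually_iterate_ne_of_not_isPeriodicPoint hx⟩
  · rintro ⟨-, habs⟩ hx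
    obtain ⟨n, hn⟩ := habs x
    obtain ⟨m, hmn, hm⟩ := hx.exists_iterate_eq_ge n
    exact hn m hmn hm

theorem stmt14 {X : Type*} [TopologicalSpace X] [T1Space X] (f : X → X)
    (hf : Continuous f) (x : X) :
    ¬ IsPeriodicPoint f x ↔ RightAbsorbing f ({x}ᶜ) :=
  stmt14_general f x
end

section
/- Let X be a T₁ topological space and f : X → X a continuous map. Then the set of periodic points of f equals the intersection of all right-absorbing open subsets of X: P(X) = L(X^r). -/
open Set Topology

/-! A periodic point returns to itself along arbitrarily late iterates, so it lies in every set
that eventually contains its trajectory. A non-periodic point `x` is hit at most once by any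
trajectory, so `{x}ᶜ` eventually contains every trajectory; in a T₁ space it is open, hence a
right-absorbing set missing `x`. -/

namespace Function

variable {α : Type*} {f : α → α} {x y : α}

theorem isPeriodicPoint_iff_mem_periodicPts : IsPeriodicPoint f x ↔ x ∈ periodicPts f := by
  simp only [IsPeriodicPoint, mem_periodicPts, IsPeriodicPt, IsFixedPt, ge_iff_le,
    Nat.one_le_iff_ne_zero, gt_iff_lt, Nat.pos_iff_ne_zero]

theorem mem_of_mem_periodicPts_of_eventually_iterate_mem {E : Set α} (hx : x ∈ periodicPts f)
    (hE : ∃ n, ∀ m ≥ n, f^[m] x ∈ E) : x ∈ E := by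
  obtain ⟨p, hp, hpx⟩ := mem_periodicPts.1 hx
  obtain ⟨N, hN⟩ := hE
  simpa only [(hpx.mul_const N).eq] using hN (p * N) (Nat.le_mul_of_pos_left N hp)

theorem iterate_ne_of_notMem_periodicPts {m k : ℕ} (hx : x ∉ periodicPts f)
    (hm : f^[m] y = x) (hmk : m < k) : f^[k] y ≠ x := by
  intro hk
  have hperiodic : IsPeriodicPt f (k - m) x := by
    rw [IsPeriodicPt, IsFixedPt]
    nth_rw 1 [← hm]
    rwa [← iterate_add_apply, Nat.sub_add_cancel hmk.le]
  exact hx (mk_mem_periodicPts (Nat.sub_pos_of_lt hmk) hperiodic)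

theorem eventually_iterate_ne_of_notMem_periodicPts (hx : x ∉ periodicPts f) (y : α) :
    ∃ n, ∀ k ≥ n, f^[k] y ≠ x := by
  by_cases hhit : ∃ m, f^[m] y = x
  · obtain ⟨m, hm⟩ := hhit
    exact ⟨m + 1, fun k hk => iterate_ne_of_notMem_periodicPts hx hm hk⟩
  · exact ⟨0, fun k _ hk => hhit ⟨k, hk⟩⟩

end Function

open Function

theorem rightAbsorbing_compl_singleton {X : Type*} [TopologicalSpace X] [T1Space X] {f : X → X}
    {x : X} (hx : x ∉ periodicPts f) : RightAbsorbing f {x}ᶜ :=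
  ⟨isOpen_compl_singleton, eventually_iterate_ne_of_notMem_periodicPts hx⟩

theorem stmt15_general {X : Type*} [TopologicalSpace X] [T1Space X] (f : X → X) :
    {x | IsPeriodicPoint f x} = ⋂ E ∈ {E : Set X | RightAbsorbing f E}, E := by
  ext x
  simp only [mem_ofPred_eq, mem_iInter, isPeriodicPoint_iff_mem_periodicPts]
  refine ⟨fun hx E hE => mem_of_mem_periodicPts_of_eventually_iterate_mem hx (hE.2 x),
    fun h => ?_⟩
  by_contra hx
  exact h _ (rightAbsorbing_compl_singleton hx) rfl

theorem stmt15 {X : Type*} [TopologicalSpace X] [T1Space X] (f : X → X)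
    (hf : Continuous f) :
    {x | IsPeriodicPoint f x} = ⋂ E ∈ {E : Set X | RightAbsorbing f E}, E :=
  stmt15_general f
end
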